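/- Let I be a degree-based topological index with coefficients c_{ij} for 1 ≤ i ≤ j ≤ 3, i.e., I(G) = Σ c_{ij} m_{ij}(G). Define c'_{12} = c_{12} − 4c_{22} + 3c_{23}, c'_{13} = c_{13} − 3c_{22} + 2c_{23}, c'_{33} = c_{22} − 2c_{23} + c_{33}, and C_I(n,m) = (6n − 5m)c_{22} + (6m − 6n)c_{23}. Then for every simple connected graph G with maximum degree at most 3, n ≥ 3 vertices, and m edges, I(G) = c'_{12} m_{12} + c'_{13} m_{13} + c'_{33} m_{33} + C_I(n,m). -/

import Mathlib

/-!
Each edge `uv` contributes `1` to the edge count `m` and `1/d(u) + 1/d(v)` to the vertex count `n`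
(every vertex has positive degree, so the contributions of its incident edges sum to `1`). The
per-edge values depend only on the type `{d(u), d(v)}`, so both counts are linear in the `m_{ij}`;
connectivity with `n ≥ 3` rules out edges of type `{1, 1}`, and solving the two relations for
`m_{22}` and `m_{23}` gives the identities that reduce the index.
-/

open scoped Classical

/-- The number of edges of `G` whose two endpoints have degrees `i` and `j`. -/
noncomputable def edgeTypeCount {V : Type*} [Fintype V] (G : SimpleGraph V) (i j : ℕ) : ℕ :=
  (G.edgeSet.toFinset.filter (fun e => Sym2.map (fun v => G.degree v) e = s(i, j))).card

open Finset

namespace SimpleGraph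

variable {V : Type*} [Fintype V] {G : SimpleGraph V}

lemma sum_edgeSet_sum_toFinset_eq_sum_degree_mul (f : V → ℝ) :
    ∑ e ∈ G.edgeSet.toFinset, ∑ v ∈ e.toFinset, f v = ∑ v, G.degree v * f v := by
  calc ∑ e ∈ G.edgeSet.toFinset, ∑ v ∈ e.toFinset, f v
      = ∑ v, ∑ _e ∈ G.incidenceFinset v, f v :=
        sum_comm' fun e v => by simp [incidenceSet, and_comm]
    _ = ∑ v, G.degree v * f v := by simp [card_incidenceFinset_eq_degree]

lemma sum_edgeSet_sum_inv_degree_eq_card (hpos : ∀ v, G.degree v ≠ 0) :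
    ∑ e ∈ G.edgeSet.toFinset, ∑ v ∈ e.toFinset, ((G.degree v : ℝ))⁻¹ = Fintype.card V := by
  rw [sum_edgeSet_sum_toFinset_eq_sum_degree_mul]
  simp [hpos]

lemma sum_toFinset_degree_eq_lift_map {e : Sym2 V} (he : e ∈ G.edgeSet) (φ : ℕ → ℝ) :
    ∑ v ∈ e.toFinset, φ (G.degree v) =
      Sym2.lift ⟨fun i j => φ i + φ j, fun _ _ => add_comm _ _⟩ (e.map fun v => G.degree v) := by
  induction e using Sym2.ind with
  | _ a b => rw [Sym2.toFinset_mk_eq, sum_pair (G.ne_of_adj he), Sym2.map_mk, Sym2.lift_mk]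

lemma Connected.not_adj_of_degree_eq_one (hconn : G.Connected) (hn : 3 ≤ Fintype.card V)
    {a b : V} (ha : G.degree a = 1) (hb : G.degree b = 1) : ¬G.Adj a b := by
  intro hab
  obtain ⟨w, -, hw⟩ : ∃ w ∈ (univ : Finset V), w ∉ ({a, b} : Finset V) :=
    exists_mem_notMem_of_card_lt_card (card_le_two.trans_lt (by rw [card_univ]; omega))
  obtain ⟨d, -, hfst, hsnd⟩ :=
    (hconn.preconnected a w).some.exists_boundary_dart {a, b} (by simp) (by simpa using hw)
  have hleaf {x y z : V} (hx : G.degree x = 1) (hy : G.Adj x y) (hz : G.Adj x z) : y = z :=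
    (degree_eq_one_iff_existsUnique_adj.mp hx).unique hy hz
  rcases hfst with h | h
  · exact hsnd (Or.inr (hleaf ha (h ▸ d.adj) hab))
  · exact hsnd (Or.inl (hleaf hb (h ▸ d.adj) hab.symm))

lemma edgeTypeCount_one_one_eq_zero (hconn : G.Connected) (hn : 3 ≤ Fintype.card V) :
    edgeTypeCount G 1 1 = 0 := by
  refine card_eq_zero.mpr (filter_eq_empty_iff.mpr fun e he => ?_)
  induction e using Sym2.ind with
  | _ a b =>
    rw [Sym2.map_mk, Sym2.eq_iff]
    rintro (⟨ha, hb⟩ | ⟨ha, hb⟩) <;>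
      exact hconn.not_adj_of_degree_eq_one hn ha hb (by simpa using he)

lemma sum_edgeSet_eq_sum_edgeTypeCount (hdeg : ∀ v, G.degree v ∈ Icc 1 3) (g : Sym2 ℕ → ℝ) :
    ∑ e ∈ G.edgeSet.toFinset, g (e.map fun v => G.degree v) =
      g s(1, 1) * edgeTypeCount G 1 1 + g s(1, 2) * edgeTypeCount G 1 2 +
        g s(1, 3) * edgeTypeCount G 1 3 + g s(2, 2) * edgeTypeCount G 2 2 +
        g s(2, 3) * edgeTypeCount G 2 3 + g s(3, 3) * edgeTypeCount G 3 3 := by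
  have hmaps : ∀ e ∈ G.edgeSet.toFinset, e.map (fun v => G.degree v) ∈ (Icc 1 3).sym2 := by
    intro e _
    induction e using Sym2.ind with
    | _ a b => simpa only [Sym2.map_mk, mk_mem_sym2_iff] using ⟨hdeg a, hdeg b⟩
  have hT : (Icc 1 3).sym2 = {s(1, 1), s(1, 2), s(1, 3), s(2, 2), s(2, 3), s(3, 3)} := by decide
  rw [← sum_fiberwise_of_maps_to' hmaps, hT]
  simp [edgeTypeCount, mul_comm, add_assoc]

lemma degree_mem_Icc (hconn : G.Connected) (hn : 3 ≤ Fintype.card V)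
    (hdeg : ∀ v, G.degree v ≤ 3) (v : V) : G.degree v ∈ Icc 1 3 :=
  have : Nontrivial V := Fintype.one_lt_card_iff_nontrivial.mp (by omega)
  mem_Icc.mpr ⟨hconn.preconnected.degree_pos_of_nontrivial v, hdeg v⟩

lemma card_edgeSet_eq_sum_edgeTypeCount (hconn : G.Connected) (hn : 3 ≤ Fintype.card V)
    (hdeg : ∀ v, G.degree v ≤ 3) :
    (#G.edgeSet.toFinset : ℝ) = edgeTypeCount G 1 2 + edgeTypeCount G 1 3 +
      edgeTypeCount G 2 2 + edgeTypeCount G 2 3 + edgeTypeCount G 3 3 := by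
  simpa [edgeTypeCount_one_one_eq_zero hconn hn] using
    sum_edgeSet_eq_sum_edgeTypeCount (degree_mem_Icc hconn hn hdeg) fun _ => 1

lemma card_eq_sum_edgeTypeCount (hconn : G.Connected) (hn : 3 ≤ Fintype.card V)
    (hdeg : ∀ v, G.degree v ≤ 3) :
    (Fintype.card V : ℝ) = 3 / 2 * edgeTypeCount G 1 2 + 4 / 3 * edgeTypeCount G 1 3 +
      edgeTypeCount G 2 2 + 5 / 6 * edgeTypeCount G 2 3 + 2 / 3 * edgeTypeCount G 3 3 := by
  have hdeg' := degree_mem_Icc hconn hn hdeg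
  calc (Fintype.card V : ℝ)
      = ∑ e ∈ G.edgeSet.toFinset, ∑ v ∈ e.toFinset, ((G.degree v : ℝ))⁻¹ :=
        (sum_edgeSet_sum_inv_degree_eq_card fun v =>
          Nat.one_le_iff_ne_zero.mp (mem_Icc.mp (hdeg' v)).1).symm
    _ = ∑ e ∈ G.edgeSet.toFinset, Sym2.lift ⟨fun i j : ℕ => (i : ℝ)⁻¹ + (j : ℝ)⁻¹,
          fun _ _ => add_comm _ _⟩ (e.map fun v => G.degree v) :=
        sum_congr rfl fun e he =>
          sum_toFinset_degree_eq_lift_map (Set.mem_toFinset.mp he) fun d => (d : ℝ)⁻¹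
    _ = _ := by
        rw [sum_edgeSet_eq_sum_edgeTypeCount hdeg', edgeTypeCount_one_one_eq_zero hconn hn]
        norm_num

lemma edgeTypeCount_two_two_eq (hconn : G.Connected) (hn : 3 ≤ Fintype.card V)
    (hdeg : ∀ v, G.degree v ≤ 3) :
    (edgeTypeCount G 2 2 : ℝ) = 6 * Fintype.card V - 5 * #G.edgeSet.toFinset -
      4 * edgeTypeCount G 1 2 - 3 * edgeTypeCount G 1 3 + edgeTypeCount G 3 3 := by
  rw [card_eq_sum_edgeTypeCount hconn hn hdeg, card_edgeSet_eq_sum_edgeTypeCount hconn hn hdeg]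
  ring

lemma edgeTypeCount_two_three_eq (hconn : G.Connected) (hn : 3 ≤ Fintype.card V)
    (hdeg : ∀ v, G.degree v ≤ 3) :
    (edgeTypeCount G 2 3 : ℝ) = 6 * #G.edgeSet.toFinset - 6 * Fintype.card V +
      3 * edgeTypeCount G 1 2 + 2 * edgeTypeCount G 1 3 - 2 * edgeTypeCount G 3 3 := by
  rw [card_eq_sum_edgeTypeCount hconn hn hdeg, card_edgeSet_eq_sum_edgeTypeCount hconn hn hdeg]
  ring

end SimpleGraph

theorem index_reduction {V : Type*} [Fintype V] (G : SimpleGraph V)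
    (hconn : G.Connected) (hdeg : ∀ v : V, G.degree v ≤ 3)
    (hn : 3 ≤ Fintype.card V)
    (c12 c13 c22 c23 c33 : ℝ) :
    c12 * edgeTypeCount G 1 2 + c13 * edgeTypeCount G 1 3 + c22 * edgeTypeCount G 2 2 +
        c23 * edgeTypeCount G 2 3 + c33 * edgeTypeCount G 3 3 =
      (c12 - 4 * c22 + 3 * c23) * edgeTypeCount G 1 2 +
        (c13 - 3 * c22 + 2 * c23) * edgeTypeCount G 1 3 +
        (c22 - 2 * c23 + c33) * edgeTypeCount G 3 3 +
        ((6 * (Fintype.card V : ℝ) - 5 * (G.edgeSet.toFinset.card : ℝ)) * c22 +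
          (6 * (G.edgeSet.toFinset.card : ℝ) - 6 * (Fintype.card V : ℝ)) * c23) := by
  rw [SimpleGraph.edgeTypeCount_two_two_eq hconn hn hdeg,
    SimpleGraph.edgeTypeCount_two_three_eq hconn hn hdeg]
  ring
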